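/- arXiv:2501.02925 — 3 statements merged into one kernel-verified Lean document; each statement's English description precedes it below -/
import Mathlib

section
/- Let p be a prime, q = p^α a prime power, k ≥ 2, and L ⊊ {0,...,q-1} nonempty. Let F ⊆ 2^[n] satisfy: |E| mod q ∉ L for every E ∈ F; |F_1 ∩ ... ∩ F_k| mod q ∈ L for any k distinct sets from F; and there exists an integer t ≤ q-1 such that |E| mod q ∈ {q-t,...,q-1} for each E ∈ F. Then |F| ≤ (k-1) Σ_{j=q-t}^{q-1} C(n, j). -/
/-!
Over `ZMod p`, binomial coefficients `C(r, j)` with `j < q = p ^ α` depend only on `r mod q`, so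
by triangular interpolation there is `ρ(r) = Σ_{q-t ≤ j < q} c_j C(r, j)` vanishing when
`r mod q ∈ L` and equal to `1` when `r mod q ∈ [q-t, q) \ L`. The functions
`f_A(C) = ρ(|A ∩ C|)` all lie in the span of the indicators `[B ⊆ C]` with `|B| ∈ [q-t, q)`,
of dimension `D = Σ_{j=q-t}^{q-1} C(n, j)`. Peel off `k - 1` subfamilies of at most `D` sets whose
functions span those of all remaining sets. If a set `A` is left over, then starting from `{A}`
and evaluating at the intersection built so far, each peeled subfamily supplies a new member
keeping `ρ(|∩ T|) ≠ 0`; after `k - 1` steps this contradicts the `k`-wise condition.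
-/

open Finset

open Polynomial in
theorem cast_choose_add_prime_pow {p : ℕ} [Fact p.Prime] {α j : ℕ} (hj : j < p ^ α) (M : ℕ) :
    ((M + p ^ α).choose j : ZMod p) = M.choose j := by
  -- `(X + 1) ^ (M + p ^ α) = (X + 1) ^ M * (X ^ p ^ α + 1)` in characteristic `p`
  rw [← coeff_X_add_one_pow, ← coeff_X_add_one_pow, pow_add, add_pow_char_pow, one_pow, mul_add,
    mul_one, coeff_add, coeff_mul_X_pow', if_neg (by omega), zero_add]

theorem cast_choose_mod_prime_pow {p : ℕ} [Fact p.Prime] {α j : ℕ} (hj : j < p ^ α) (M : ℕ) :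
    ((M % p ^ α).choose j : ZMod p) = M.choose j := by
  have hshift (r m : ℕ) : ((r + p ^ α * m).choose j : ZMod p) = r.choose j := by
    induction m with
    | zero => simp
    | succ m ih => rw [mul_add_one, ← add_assoc, cast_choose_add_prime_pow hj, ih]
  rw [← hshift (M % p ^ α) (M / p ^ α), Nat.mod_add_div]

theorem exists_sum_mul_choose_eq {R : Type*} [CommRing R] (s : Finset ℕ) (f : ℕ → R) :
    ∃ c : ℕ → R, ∀ r ∈ s, ∑ j ∈ s, c j * r.choose j = f r := by
  induction s using Finset.induction_on_max with
  | empty => exact ⟨0, by simp⟩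
  | insert a s hlt ih =>
    obtain ⟨c, hc⟩ := ih
    have ha : a ∉ s := fun h => (hlt a h).false
    -- `C(r, a) = 0` for `r < a`, so the new coefficient `c a` only affects the value at `a`
    have hsum (r : ℕ) : ∑ j ∈ s, Function.update c a (f a - ∑ j ∈ s, c j * a.choose j) j *
        r.choose j = ∑ j ∈ s, c j * r.choose j :=
      sum_congr rfl fun j hj => by rw [Function.update_of_ne (hlt j hj).ne]
    refine ⟨Function.update c a (f a - ∑ j ∈ s, c j * a.choose j), fun r hr => ?_⟩
    rw [sum_insert ha, hsum, Function.update_self]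
    rcases mem_insert.1 hr with rfl | hr
    · simp
    · rw [Nat.choose_eq_zero_of_lt (hlt r hr), Nat.cast_zero, mul_zero, zero_add, hc r hr]

theorem exists_sum_mul_choose_eq_ite_mod_prime_pow {p : ℕ} [Fact p.Prime] (α a : ℕ)
    (L : Finset ℕ) : ∃ c : ℕ → ZMod p, ∀ r, ∑ j ∈ Ico a (p ^ α), c j * r.choose j =
      if r % p ^ α ∈ L ∨ r % p ^ α < a then 0 else 1 := by
  obtain ⟨c, hc⟩ := exists_sum_mul_choose_eq (Ico a (p ^ α))
    fun r => if r ∈ L ∨ r < a then (0 : ZMod p) else 1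
  refine ⟨c, fun r => ?_⟩
  have hmod : r % p ^ α < p ^ α := Nat.mod_lt _ (pow_pos (Fact.out : p.Prime).pos α)
  have hsum : ∑ j ∈ Ico a (p ^ α), c j * r.choose j
      = ∑ j ∈ Ico a (p ^ α), c j * (r % p ^ α).choose j :=
    sum_congr rfl fun j hj => by rw [cast_choose_mod_prime_pow (mem_Ico.1 hj).2]
  rw [hsum]
  by_cases hra : r % p ^ α < a
  · rw [if_pos (Or.inr hra)]
    exact sum_eq_zero fun j hj => by
      rw [Nat.choose_eq_zero_of_lt (hra.trans_le (mem_Ico.1 hj).1), Nat.cast_zero, mul_zero]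
  · exact hc _ (mem_Ico.2 ⟨not_lt.1 hra, hmod⟩)

theorem exists_mem_apply_ne_zero_of_mem_span {R V M : Type*} [Semiring R] [AddCommMonoid V]
    [Module R V] [AddCommMonoid M] [Module R M] (f : V →ₗ[R] M) {s : Set V} {x : V}
    (hx : x ∈ Submodule.span R s) (hfx : f x ≠ 0) : ∃ y ∈ s, f y ≠ 0 := by
  by_contra! h
  exact hfx (Submodule.span_le.2 (fun y hy => LinearMap.mem_ker.2 (h y hy)) hx)

theorem Finset.exists_subset_card_le_finrank_forall_mem_span {K V ι : Type*} [Field K]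
    [AddCommGroup V] [Module K V] [DecidableEq ι] {W : Submodule K V} [FiniteDimensional K W]
    {v : ι → V} {F : Finset ι} (hv : ∀ i ∈ F, v i ∈ W) :
    ∃ I ⊆ F, #I ≤ Module.finrank K W ∧ ∀ i ∈ F, v i ∈ Submodule.span K (v '' I) := by
  classical
  have hle : Submodule.span K (v '' F) ≤ W :=
    Submodule.span_le.2 (by simpa [Set.image_subset_iff])
  have := Submodule.finiteDimensional_of_le hle
  obtain ⟨t, hts, htcard, htspan, -⟩ := Submodule.exists_finset_span_eq_linearIndepOn K (v '' F)
  obtain ⟨I, hIF, hinj, rfl⟩ := exists_subset_injOn_image_eq_of_surjOn (F : Set ι) t hts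
  refine ⟨I, by exact_mod_cast hIF, ?_, fun i hi => ?_⟩
  · rw [card_image_of_injOn hinj] at htcard
    exact htcard ▸ Submodule.finrank_mono hle
  · rw [← coe_image, htspan]
    exact Submodule.subset_span (Set.mem_image_of_mem v hi)

section KWise

variable {K β : Type*} [Field K] [SemilatticeInf β] [OrderTop β] [DecidableEq β]
  {W : Submodule K (β → K)} [FiniteDimensional K W] {φ : β → K} {F : Finset β}

theorem exists_card_eq_add_one_inf_ne_zero (hW : ∀ A ∈ F, (fun C => φ (A ⊓ C)) ∈ W)
    (hφ : ∀ A ∈ F, φ A ≠ 0) (k : ℕ) (hF : k * Module.finrank K W < #F) :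
    ∃ T ⊆ F, #T = k + 1 ∧ φ (T.inf id) ≠ 0 := by
  induction k generalizing F with
  | zero =>
    obtain ⟨A, hA⟩ := card_pos.1 (by omega : 0 < #F)
    exact ⟨{A}, singleton_subset_iff.2 hA, card_singleton A, by simpa using hφ A hA⟩
  | succ k ih =>
    obtain ⟨I, hIF, hIcard, hspan⟩ := exists_subset_card_le_finrank_forall_mem_span hW
    have hcard : k * Module.finrank K W < #(F \ I) := by
      rw [card_sdiff_of_subset hIF]
      rw [add_one_mul] at hF
      omega
    obtain ⟨T, hTF, hTcard, hT⟩ := ih (fun A hA => hW A (sdiff_subset hA))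
      (fun A hA => hφ A (sdiff_subset hA)) hcard
    obtain ⟨A, hA⟩ := card_pos.1 (by omega : 0 < #T)
    -- `C ↦ φ (A ⊓ C)` is a combination of the `C ↦ φ (B ⊓ C)`, `B ∈ I`, and is nonzero at
    -- `T.inf id ≤ A`; so some `B ∈ I`, necessarily outside `T`, has `φ (B ⊓ T.inf id) ≠ 0`.
    have hAT : A ⊓ T.inf id = T.inf id := inf_eq_right.2 (inf_le (f := id) hA)
    obtain ⟨_, ⟨B, hB, rfl⟩, hBT⟩ := exists_mem_apply_ne_zero_of_mem_span
      (LinearMap.proj (R := K) (φ := fun _ : β => K) (T.inf id))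
      (hspan A (sdiff_subset (hTF hA))) (by simpa only [LinearMap.proj_apply, hAT] using hT)
    have hBnotT : B ∉ T := fun h => (mem_sdiff.1 (hTF h)).2 hB
    refine ⟨insert B T, insert_subset (hIF hB) (hTF.trans sdiff_subset), ?_, ?_⟩
    · rw [card_insert_of_notMem hBnotT, hTcard]
    · simpa using hBT

theorem card_le_mul_finrank_of_inf_eq_zero (hW : ∀ A ∈ F, (fun C => φ (A ⊓ C)) ∈ W)
    (hφ : ∀ A ∈ F, φ A ≠ 0) {k : ℕ} (hk : 1 ≤ k)
    (hT : ∀ T ⊆ F, #T = k → φ (T.inf id) = 0) : #F ≤ (k - 1) * Module.finrank K W := by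
  by_contra! hF
  obtain ⟨T, hTF, hTcard, hTφ⟩ := exists_card_eq_add_one_inf_ne_zero hW hφ (k - 1) hF
  exact hTφ (hT T hTF (by omega))

end KWise

theorem card_filter_card_mem (α : Type*) [Fintype α] (s : Finset ℕ) :
    #{B : Finset α | #B ∈ s} = ∑ j ∈ s, (Fintype.card α).choose j := by
  rw [card_eq_sum_card_fiberwise (f := card) (s := {B : Finset α | #B ∈ s}) (t := s)
    fun B hB => (mem_filter.1 hB).2]
  refine sum_congr rfl fun j hj => ?_
  rw [← card_univ, ← card_powersetCard, powersetCard_eq_filter, powerset_univ, filter_filter]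
  congr 1
  exact filter_congr fun B _ => ⟨And.right, fun h => ⟨h ▸ hj, h⟩⟩

theorem cast_choose_card_inter_eq_sum {R α : Type*} [AddCommMonoidWithOne R] [DecidableEq α]
    (A C : Finset α) (j : ℕ) :
    ((#(A ∩ C)).choose j : R) = ∑ B ∈ powersetCard j A, (Set.Ici B).indicator 1 C := by
  have h : powersetCard j (A ∩ C) = {B ∈ powersetCard j A | B ⊆ C} := by
    ext B
    simp only [mem_powersetCard, mem_filter, subset_inter_iff]
    tauto
  rw [← card_powersetCard, h, natCast_card_filter]
  exact sum_congr rfl fun B _ => by simp [Set.indicator_apply]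

section UpperIndicatorSpan

variable (K α : Type*) [Field K] [Fintype α]

def upperIndicatorSpan (s : Finset ℕ) : Submodule K (Finset α → K) :=
  Submodule.span K (Set.range fun B : ({B : Finset α | #B ∈ s} : Finset (Finset α)) =>
    (Set.Ici (B : Finset α)).indicator 1)

instance (s : Finset ℕ) : FiniteDimensional K (upperIndicatorSpan K α s) :=
  FiniteDimensional.span_of_finite K (Set.finite_range _)

theorem finrank_upperIndicatorSpan_le (s : Finset ℕ) :
    Module.finrank K (upperIndicatorSpan K α s) ≤ ∑ j ∈ s, (Fintype.card α).choose j :=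
  (finrank_range_le_card _).trans (by rw [Fintype.card_coe, card_filter_card_mem])

variable {K α} [DecidableEq α]

theorem sum_mul_choose_card_inter_mem_upperIndicatorSpan (s : Finset ℕ) (c : ℕ → K)
    (A : Finset α) :
    (fun C => ∑ j ∈ s, c j * (#(A ∩ C)).choose j) ∈ upperIndicatorSpan K α s := by
  have h : (fun C => ∑ j ∈ s, c j * (#(A ∩ C)).choose j) =
      ∑ j ∈ s, c j • ∑ B ∈ powersetCard j A, (Set.Ici B).indicator (1 : Finset α → K) := by
    ext C
    simp [cast_choose_card_inter_eq_sum, Finset.sum_apply]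
  rw [h]
  refine Submodule.sum_mem _ fun j hj =>
    Submodule.smul_mem _ _ (Submodule.sum_mem _ fun B hB => ?_)
  have hB : B ∈ ({B : Finset α | #B ∈ s} : Finset (Finset α)) := by
    simpa [(mem_powersetCard.1 hB).2] using hj
  exact Submodule.subset_span ⟨⟨B, hB⟩, rfl⟩

end UpperIndicatorSpan

theorem stmt9_general (p α n k : ℕ) (hp : p.Prime) (q : ℕ) (hq : q = p ^ α)
    (hk : 2 ≤ k) (L : Finset ℕ)
    (t : ℕ)
    (𝓕 : Finset (Finset (Fin n)))
    (havoid : ∀ E ∈ 𝓕, E.card % q ∉ L)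
    (hint : ∀ S : Finset (Finset (Fin n)), S ⊆ 𝓕 → S.card = k → (S.inf id).card % q ∈ L)
    (hsize : ∀ E ∈ 𝓕, E.card % q ∈ Finset.Ico (q - t) q) :
    𝓕.card ≤ (k - 1) * ∑ j ∈ Finset.Ico (q - t) q, n.choose j := by
  have := Fact.mk hp
  subst hq
  obtain ⟨c, hc⟩ := exists_sum_mul_choose_eq_ite_mod_prime_pow (p := p) α (p ^ α - t) L
  let φ (C : Finset (Fin n)) : ZMod p := ∑ j ∈ Ico (p ^ α - t) (p ^ α), c j * (#C).choose j
  refine (card_le_mul_finrank_of_inf_eq_zero (φ := φ)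
    (W := upperIndicatorSpan (ZMod p) (Fin n) (Ico (p ^ α - t) (p ^ α)))
    (fun A _ => sum_mul_choose_card_inter_mem_upperIndicatorSpan _ c A)
    (fun A hA => ?_) (by omega) (fun T hT hTk => ?_)).trans (Nat.mul_le_mul_left _ ?_)
  · have hA_mod := mem_Ico.1 (hsize A hA)
    simp only [φ, hc, if_neg (not_or.2 ⟨havoid A hA, not_lt.2 hA_mod.1⟩)]
    exact one_ne_zero
  · simp only [φ, hc, if_pos (Or.inl (hint T hT hTk))]
  · simpa using finrank_upperIndicatorSpan_le (ZMod p) (Fin n) (Ico (p ^ α - t) (p ^ α))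

/-- Theorem main4: a `k`-wise `q`-modular `L`-avoiding `L`-intersecting family whose
member sizes are all `≡ q-t, ..., q-1 (mod q)` has size at most
`(k-1) Σ_{j=q-t}^{q-1} C(n,j)`. -/
theorem stmt9 (p α n k : ℕ) (hp : p.Prime) (hα : 1 ≤ α) (q : ℕ) (hq : q = p ^ α)
    (hk : 2 ≤ k) (L : Finset ℕ) (hL : L ⊂ Finset.range q) (hLne : L.Nonempty)
    (t : ℕ) (ht : t ≤ q - 1)
    (𝓕 : Finset (Finset (Fin n)))
    (havoid : ∀ E ∈ 𝓕, E.card % q ∉ L)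
    (hint : ∀ S : Finset (Finset (Fin n)), S ⊆ 𝓕 → S.card = k → (S.inf id).card % q ∈ L)
    (hsize : ∀ E ∈ 𝓕, E.card % q ∈ Finset.Ico (q - t) q) :
    𝓕.card ≤ (k - 1) * ∑ j ∈ Finset.Ico (q - t) q, n.choose j :=
  stmt9_general p α n k hp q hq hk L t 𝓕 havoid hint hsize
end

section
/- Let p be a prime, q = p^α a prime power, 1 ≤ s < q, and L = {1,...,s}. If F ⊆ 2^[n] is a family such that |E| ≡ 0 (mod q) for each E ∈ F and |E ∩ F'| mod q ∈ L for all distinct E, F' ∈ F, then |F| ≤ Σ_{j=0}^{s} C(n-1, j). -/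
/-!
Work over `𝔽_p` with functions on the cube `2^[n]`. The functions of degree at most `s` (spanned by
the monomials `S ↦ [T ⊆ S]` with `|T| ≤ s`) form a space of dimension at most `∑_{j ≤ s} C(n, j)`.
For `E ∈ 𝓕` take `f_E(S) = ∑_{j ≤ s} (-1)^j C(|E ∩ S|, j) = (-1)^s C(|E ∩ S| - 1, s)`; by Lucas'
theorem for `q = p^α`, `p ∤ C(|E| - 1, s)` while `p ∣ C(|E ∩ F| - 1, s)` for distinct `E, F ∈ 𝓕`.
Fix a point `x₀` and, for each `T ∌ x₀` with `|T| < s`, add `g_T(S) = [T ⊆ S] |S|`, which has degree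
`≤ s` and vanishes on `𝓕` because `p ∣ |E|`. Evaluating at `E` and at `T` or `T ∪ {x₀}` (whichever
size is prime to `p`) gives a triangular system, so all these functions are independent and
`|𝓕| + ∑_{j < s} C(n-1, j) ≤ ∑_{j ≤ s} C(n, j)`, which is the bound by Pascal's rule.
-/

open Finset

namespace Choose

variable {n k p : ℕ} [Fact p.Prime]

theorem choose_modEq_choose_mod_pow_mul_choose_div_pow_nat (a : ℕ) :
    n.choose k ≡ (n % p ^ a).choose (k % p ^ a) * (n / p ^ a).choose (k / p ^ a) [MOD p] := by
  induction a generalizing n k with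
  | zero =>
    rw [pow_zero, Nat.mod_one, Nat.mod_one, Nat.div_one, Nat.div_one, Nat.choose_self, one_mul]
  | succ a ih =>
    have hmod (m : ℕ) : m % p ^ (a + 1) % p = m % p :=
      Nat.mod_mod_of_dvd m (dvd_pow_self p a.succ_ne_zero)
    have hdiv (m : ℕ) : m % p ^ (a + 1) / p = m / p % p ^ a := by
      rw [pow_succ', Nat.mod_mul_right_div_self]
    have hdiv_div (m : ℕ) : m / p / p ^ a = m / p ^ (a + 1) := by
      rw [Nat.div_div_eq_div_mul, pow_succ']
    have lucas_low := (choose_modEq_choose_mod_mul_choose_div_nat (p := p)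
      (n := n % p ^ (a + 1)) (k := k % p ^ (a + 1))).symm
    rw [hmod, hmod, hdiv, hdiv] at lucas_low
    calc n.choose k ≡ (n % p).choose (k % p) * (n / p).choose (k / p) [MOD p] :=
          choose_modEq_choose_mod_mul_choose_div_nat
      _ ≡ (n % p).choose (k % p) * ((n / p % p ^ a).choose (k / p % p ^ a) *
            (n / p / p ^ a).choose (k / p / p ^ a)) [MOD p] := ih.mul_left _
      _ = (n % p).choose (k % p) * (n / p % p ^ a).choose (k / p % p ^ a) *
            (n / p ^ (a + 1)).choose (k / p ^ (a + 1)) := by rw [hdiv_div, hdiv_div, mul_assoc]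
      _ ≡ _ [MOD p] := lucas_low.mul_right _

end Choose

theorem ZMod.natCast_choose_pow_sub_one {p a k : ℕ} [Fact p.Prime] (hk : k < p ^ a) :
    ((p ^ a - 1).choose k : ZMod p) = (-1) ^ k := by
  induction k with
  | zero => simp
  | succ k ih =>
    have hpascal :
        (p ^ a).choose (k + 1) = (p ^ a - 1).choose k + (p ^ a - 1).choose (k + 1) := by
      rw [← Nat.choose_succ_succ', Nat.sub_add_cancel (Nat.one_le_pow _ _ (Fact.out : p.Prime).pos)]
    have hzero : ((p ^ a).choose (k + 1) : ZMod p) = 0 :=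
      (ZMod.natCast_eq_zero_iff _ _).mpr
        ((Fact.out : p.Prime).dvd_choose_pow_iff.mpr ⟨k.succ_ne_zero, hk.ne⟩)
    rw [hpascal, Nat.cast_add, ih (by omega)] at hzero
    rw [pow_succ]
    linear_combination hzero

theorem Nat.Prime.not_dvd_choose_pred {p a s x : ℕ} (hp : p.Prime) (hs : s < p ^ a)
    (hx : p ^ a ∣ x) (hx0 : 0 < x) : ¬ p ∣ (x - 1).choose s := by
  have := Fact.mk hp
  obtain ⟨c, rfl⟩ := hx
  have hq : 0 < p ^ a := pow_pos hp.pos a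
  have hdecomp : p ^ a * c - 1 = p ^ a * (c - 1) + (p ^ a - 1) := by
    obtain ⟨c, rfl⟩ := Nat.exists_eq_add_of_lt (Nat.pos_of_mul_pos_left hx0)
    simp only [zero_add, Nat.add_sub_cancel, mul_add, mul_one]
    omega
  have h := Choose.choose_modEq_choose_mod_pow_mul_choose_div_pow_nat
    (p := p) (n := p ^ a * c - 1) (k := s) a
  rw [hdecomp, Nat.mul_add_mod, Nat.mod_eq_of_lt (by omega : p ^ a - 1 < p ^ a),
    Nat.mul_add_div hq, Nat.div_eq_of_lt (by omega : p ^ a - 1 < p ^ a), Nat.mod_eq_of_lt hs,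
    Nat.div_eq_of_lt hs, add_zero, Nat.choose_zero_right, mul_one] at h
  rw [← ZMod.natCast_eq_zero_iff, hdecomp, (ZMod.natCast_eq_natCast_iff _ _ _).mpr h,
    ZMod.natCast_choose_pow_sub_one hs]
  exact pow_ne_zero _ (neg_ne_zero.mpr one_ne_zero)

theorem Nat.Prime.dvd_choose_pred_of_mod_le {p a s x : ℕ} (hp : p.Prime) (hs : s < p ^ a)
    (h1 : 1 ≤ x % p ^ a) (h2 : x % p ^ a ≤ s) : p ∣ (x - 1).choose s := by
  have := Fact.mk hp
  have hdecomp : x - 1 = p ^ a * (x / p ^ a) + (x % p ^ a - 1) := by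
    have := Nat.div_add_mod x (p ^ a)
    omega
  have h := Choose.choose_modEq_choose_mod_pow_mul_choose_div_pow_nat
    (p := p) (n := x - 1) (k := s) a
  rw [hdecomp, Nat.mul_add_mod, Nat.mod_eq_of_lt (by omega : x % p ^ a - 1 < p ^ a),
    Nat.mod_eq_of_lt hs, Nat.choose_eq_zero_of_lt (by omega : x % p ^ a - 1 < s), zero_mul] at h
  rw [hdecomp]
  exact Nat.modEq_zero_iff_dvd.mp h

theorem sum_range_neg_one_pow_mul_choose {R : Type*} [CommRing R] {x : ℕ} (hx : 0 < x) (s : ℕ) :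
    ∑ j ∈ range (s + 1), (-1 : R) ^ j * (x.choose j : R) = (-1) ^ s * ((x - 1).choose s : R) := by
  obtain ⟨m, rfl⟩ := Nat.exists_eq_add_of_lt hx
  simpa using
    congrArg (Int.cast : ℤ → R) (Int.alternating_sum_range_choose_eq_choose (n := m) (m := s))

theorem Nat.sum_range_succ_choose_succ (m k : ℕ) :
    ∑ j ∈ range (k + 1), (m + 1).choose j =
      ∑ j ∈ range (k + 1), m.choose j + ∑ j ∈ range k, m.choose j := by
  rw [sum_range_succ' (fun j => (m + 1).choose j), sum_range_succ' (fun j => m.choose j)]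
  simp only [Nat.choose_succ_succ', sum_add_distrib, Nat.choose_zero_right]
  ring

theorem Finset.sum_powerset_filter_card_lt {α M : Type*} [AddCommMonoid M] (A : Finset α)
    (k : ℕ) (f : ℕ → M) :
    ∑ T ∈ A.powerset with T.card < k, f T.card = ∑ j ∈ range k, A.card.choose j • f j := by
  classical
  rw [← sum_fiberwise_of_maps_to (g := card) (t := range k)
    (fun T hT => mem_range.mpr (mem_filter.mp hT).2)]
  refine sum_congr rfl fun j hj => ?_
  rw [← card_powersetCard, ← sum_const, powersetCard_eq_filter, filter_filter]
  refine sum_congr ?_ fun T hT => by rw [(mem_filter.mp hT).2]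
  ext T
  simp only [mem_filter, mem_range] at hj ⊢
  constructor
  · rintro ⟨h, -, rfl⟩
    exact ⟨h, rfl⟩
  · rintro ⟨h, rfl⟩
    exact ⟨h, hj, rfl⟩

theorem Finset.card_powerset_filter_card_lt {α : Type*} (A : Finset α) (k : ℕ) :
    #(A.powerset.filter fun T => T.card < k) = ∑ j ∈ range k, A.card.choose j := by
  have h := sum_powerset_filter_card_lt A k fun _ => 1
  simp only [smul_eq_mul, mul_one] at h
  rw [card_eq_sum_ones, h]

theorem linearIndependent_of_eval_triangular {ι X K : Type*} [Fintype ι] [Ring K]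
    [NoZeroDivisors K] (f : ι → X → K) (a : ι → X) (r : ι → ℕ) (hdiag : ∀ i, f i (a i) ≠ 0)
    (hzero : ∀ i j, j ≠ i → r i ≤ r j → f j (a i) = 0) : LinearIndependent K f := by
  classical
  rw [Fintype.linearIndependent_iff]
  intro g hg
  by_contra! hne
  obtain ⟨i, hi, hmin⟩ := (univ.filter fun i => g i ≠ 0).exists_min_image r
    (by simpa [filter_nonempty_iff] using hne)
  have heval := congrFun hg (a i)
  rw [Finset.sum_apply, sum_eq_single i] at heval
  · exact mul_ne_zero (mem_filter.mp hi).2 (hdiag i) heval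
  · intro j _ hji
    by_cases hgj : g j = 0
    · simp [hgj]
    · simp [hzero i j hji (hmin j (by simp [hgj]))]
  · simp

section LowDegree

variable {α : Type*} [DecidableEq α]

def subsetIndicator (K : Type*) [Zero K] [One K] (T : Finset α) : Finset α → K :=
  fun S => if T ⊆ S then 1 else 0

/-- Functions on `2^α` given by multilinear polynomials of degree at most `s`. -/
def lowDegreeFunctions (K α : Type*) [DecidableEq α] [Semiring K] (s : ℕ) :
    Submodule K (Finset α → K) :=
  Submodule.span K (subsetIndicator K '' {T | T.card ≤ s})

variable {K : Type*} [Field K] {s : ℕ}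

theorem fintype_card_le_of_linearIndependent_lowDegree [Fintype α] {ι : Type*} [Fintype ι]
    {v : ι → Finset α → K} (hv : LinearIndependent K v)
    (hmem : ∀ i, v i ∈ lowDegreeFunctions K α s) :
    Fintype.card ι ≤ ∑ j ∈ range (s + 1), (Fintype.card α).choose j := by
  classical
  let w : Finset (Finset α → K) :=
    (univ.powerset.filter fun T : Finset α => T.card < s + 1).image (subsetIndicator K)
  have hspan : Set.range v ≤ Submodule.span K (w : Set (Finset α → K)) := by
    rintro _ ⟨i, rfl⟩
    simpa [w, lowDegreeFunctions, Nat.lt_succ_iff] using hmem i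
  calc Fintype.card ι ≤ Fintype.card (w : Set (Finset α → K)) :=
        linearIndependent_le_span_aux' v hv _ hspan
    _ ≤ #(univ.powerset.filter fun T : Finset α => T.card < s + 1) := by
        simp only [Finset.coe_sort_coe, Fintype.card_coe]
        exact card_image_le
    _ = _ := by rw [card_powerset_filter_card_lt, card_univ]

theorem alternating_choose_mem_lowDegreeFunctions (E : Finset α) :
    (fun S => ∑ j ∈ range (s + 1), (-1 : K) ^ j * ((E ∩ S).card.choose j : K)) ∈
      lowDegreeFunctions K α s := by
  have h : (fun S => ∑ j ∈ range (s + 1), (-1 : K) ^ j * ((E ∩ S).card.choose j : K)) =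
      ∑ T ∈ E.powerset with T.card < s + 1, (-1 : K) ^ T.card • subsetIndicator K T := by
    funext S
    simp only [Finset.sum_apply, Pi.smul_apply, subsetIndicator, smul_eq_mul, mul_ite, mul_one,
      mul_zero]
    rw [← sum_filter, filter_filter]
    have hfilter : (E.powerset.filter fun T => T.card < s + 1 ∧ T ⊆ S) =
        (E ∩ S).powerset.filter fun T => T.card < s + 1 := by
      ext T
      simp only [mem_filter, mem_powerset, subset_inter_iff]
      tauto
    rw [hfilter, sum_powerset_filter_card_lt]
    simp only [nsmul_eq_mul, mul_comm]
  rw [h]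
  refine Submodule.sum_mem _ fun T hT => Submodule.smul_mem _ _ (Submodule.subset_span ⟨T, ?_, rfl⟩)
  exact Nat.lt_succ_iff.mp (mem_filter.mp hT).2

theorem card_mul_subsetIndicator_mem_lowDegreeFunctions [Fintype α] {T : Finset α}
    (hT : T.card < s) :
    (fun S => if T ⊆ S then (S.card : K) else 0) ∈ lowDegreeFunctions K α s := by
  have h : (fun S => if T ⊆ S then (S.card : K) else 0) = ∑ i, subsetIndicator K (insert i T) := by
    funext S
    simp only [Finset.sum_apply, subsetIndicator, insert_subset_iff]
    split_ifs with hTS <;> simp [hTS]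
  rw [h]
  refine Submodule.sum_mem _ fun i _ => Submodule.subset_span ⟨insert i T, ?_, rfl⟩
  exact (card_insert_le i T).trans hT

end LowDegree

theorem exists_superset_subset_insert_not_dvd_card {α : Type*} [DecidableEq α] {p : ℕ}
    (hp : p ≠ 1) {T : Finset α} {x : α} (hx : x ∉ T) :
    ∃ S, T ⊆ S ∧ S ⊆ insert x T ∧ ¬ p ∣ S.card := by
  by_cases hT : p ∣ T.card
  · refine ⟨insert x T, subset_insert x T, subset_rfl, ?_⟩
    rw [card_insert_of_notMem hx]
    exact fun h => hp (Nat.dvd_one.mp ((Nat.dvd_add_right hT).mp h))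
  · exact ⟨T, subset_rfl, subset_insert x T, hT⟩

section ModularFamily

variable {α : Type*} [Fintype α] [DecidableEq α] {p a s : ℕ} [Fact p.Prime]

theorem linearIndependent_modular_family (hs : s < p ^ a) (ha : 1 ≤ a) {𝓕 : Finset (Finset α)}
    (hsize : ∀ E ∈ 𝓕, p ^ a ∣ E.card) (hpos : ∀ E ∈ 𝓕, 0 < E.card)
    (hint : ∀ E ∈ 𝓕, ∀ F ∈ 𝓕, E ≠ F → (E ∩ F).card % p ^ a ∈ Icc 1 s) (x₀ : α) :
    LinearIndependent (ZMod p) (Sum.elim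
      (fun (E : 𝓕) S => ∑ j ∈ range (s + 1), (-1 : ZMod p) ^ j * ((E.1 ∩ S).card.choose j : ZMod p))
      (fun (T : ((univ.erase x₀).powerset.filter fun T => T.card < s)) S =>
        if T.1 ⊆ S then (S.card : ZMod p) else 0)) := by
  have hp := (Fact.out : p.Prime)
  have hx₀ (T : ((univ.erase x₀).powerset.filter fun T => T.card < s)) : x₀ ∉ T.1 :=
    fun h => notMem_erase x₀ univ (mem_powerset.mp (mem_filter.mp T.2).1 h)
  choose S hTS hSx hSp using fun T => exists_superset_subset_insert_not_dvd_card hp.ne_one (hx₀ T)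
  have hcard_zero {E} (hE : E ∈ 𝓕) : (E.card : ZMod p) = 0 :=
    (ZMod.natCast_eq_zero_iff _ _).mpr ((dvd_pow_self p (by omega)).trans (hsize E hE))
  refine linearIndependent_of_eval_triangular _ (Sum.elim (fun E => E.1) S)
    (Sum.elim (fun _ => 0) (fun T => T.1.card + 1)) ?_ ?_
  · rintro (E | T)
    · simp only [Sum.elim_inl, inter_self]
      rw [sum_range_neg_one_pow_mul_choose (hpos E E.2)]
      refine mul_ne_zero (pow_ne_zero _ (neg_ne_zero.mpr one_ne_zero)) ?_
      rw [Ne, ZMod.natCast_eq_zero_iff]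
      exact hp.not_dvd_choose_pred hs (hsize E E.2) (hpos E E.2)
    · simpa [hTS T, ZMod.natCast_eq_zero_iff] using hSp T
  · rintro (E | T) (E' | T') hne hr
    · obtain ⟨h1, h2⟩ := mem_Icc.mp (hint E' E'.2 E E.2 fun h => hne (congrArg _ (Subtype.ext h)))
      simp only [Sum.elim_inl]
      have hpos' : 0 < (E'.1 ∩ E.1).card := by
        have := Nat.mod_le (E'.1 ∩ E.1).card (p ^ a)
        omega
      rw [sum_range_neg_one_pow_mul_choose hpos',
        (ZMod.natCast_eq_zero_iff _ _).mpr (hp.dvd_choose_pred_of_mod_le hs h1 h2), mul_zero]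
    · simp [hcard_zero E.2]
    · simp at hr
    · have hT'S : ¬ T'.1 ⊆ S T := fun hsub => by
        have hT'T := (subset_insert_iff_of_notMem (hx₀ T')).mp (hsub.trans (hSx T))
        exact hne (congrArg Sum.inr (Subtype.ext
          (eq_of_subset_of_card_le hT'T (by simpa using hr))))
      simp [hT'S]

end ModularFamily

theorem stmt10_general (p α n s : ℕ) (hp : p.Prime) (hα : 1 ≤ α) (q : ℕ) (hq : q = p ^ α)
    (hsq : s < q)
    (𝓕 : Finset (Finset (Fin n)))
    (hsize : ∀ E ∈ 𝓕, q ∣ E.card)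
    (hint : ∀ E ∈ 𝓕, ∀ F' ∈ 𝓕, E ≠ F' → (E ∩ F').card % q ∈ Finset.Icc 1 s) :
    𝓕.card ≤ ∑ j ∈ Finset.range (s + 1), (n - 1).choose j := by
  subst hq
  have := Fact.mk hp
  rcases le_or_gt 𝓕.card 1 with hle | hlt
  · refine hle.trans ?_
    simpa using single_le_sum (fun j _ => Nat.zero_le ((n - 1).choose j)) (mem_range.mpr s.succ_pos)
  have hpos (E) (hE : E ∈ 𝓕) : 0 < E.card := by
    obtain ⟨F, hF, hFE⟩ := exists_mem_ne hlt E
    have := mem_Icc.mp (hint E hE F hF hFE.symm)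
    have := Nat.mod_le (E ∩ F).card (p ^ α)
    have := card_le_card (inter_subset_left : E ∩ F ⊆ E)
    omega
  obtain ⟨E, hE⟩ := card_pos.mp (by omega : 0 < 𝓕.card)
  obtain ⟨x₀, -⟩ := card_pos.mp (hpos E hE)
  obtain ⟨m, rfl⟩ : ∃ m, n = m + 1 := ⟨n - 1, (Nat.succ_pred_eq_of_pos x₀.pos).symm⟩
  have hdim := fintype_card_le_of_linearIndependent_lowDegree
    (linearIndependent_modular_family hsq hα hsize hpos hint x₀) (s := s) (by
      rintro (E | T)
      · exact alternating_choose_mem_lowDegreeFunctions E.1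
      · exact card_mul_subsetIndicator_mem_lowDegreeFunctions (mem_filter.mp T.2).2)
  rw [Fintype.card_sum, Fintype.card_coe, Fintype.card_coe, card_powerset_filter_card_lt,
    card_erase_of_mem (mem_univ x₀), card_univ, Fintype.card_fin, Nat.add_sub_cancel,
    Nat.sum_range_succ_choose_succ] at hdim
  rw [Nat.add_sub_cancel]
  omega

/-- Theorem main2: if `L = {1,...,s}` with `1 ≤ s < q`, and `𝓕` is a `q`-modular
`L`-intersecting family with all member sizes divisible by `q`, then
`|𝓕| ≤ Σ_{j=0}^{s} C(n-1, j)`. -/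
theorem stmt10 (p α n s : ℕ) (hp : p.Prime) (hα : 1 ≤ α) (q : ℕ) (hq : q = p ^ α)
    (hs1 : 1 ≤ s) (hsq : s < q)
    (𝓕 : Finset (Finset (Fin n)))
    (hsize : ∀ E ∈ 𝓕, q ∣ E.card)
    (hint : ∀ E ∈ 𝓕, ∀ F' ∈ 𝓕, E ≠ F' → (E ∩ F').card % q ∈ Finset.Icc 1 s) :
    𝓕.card ≤ ∑ j ∈ Finset.range (s + 1), (n - 1).choose j :=
  stmt10_general p α n s hp hα q hq hsq 𝓕 hsize hint
end

section
/- Let p be a prime, q = p^α, n ≥ 1, and let F ⊆ 2^[n] be a family of subsets of [n]. Suppose L ⊊ {0,...,q-1}, and for distinct Y, X ∈ 2^[n] indexed as pairs (X_1,Y_1),...,(X_m,Y_m) with |Y_i| mod q ∉ L for all i and |X_t ∩ Y_i| mod q ∈ L for all t > i. Then m ≤ Σ_{j=0}^{q-1} C(n,j). -/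
/-!
Put `F(t) := [t mod q ∉ L]` in `𝔽_p`. Newton interpolation writes `F` on `{0, …, q - 1}` as
`∑_{k<q} c_k C(t, k)`, and by Lucas's theorem `C(t, k) ≡ C(t mod q, k) (mod p)` for `k < q`,
so this expansion holds for every `t`. Since `C(|S ∩ Y|, k)` counts the `k`-subsets of `Y`
contained in `S`, each `g_i(S) := F(|S ∩ Y_i|)` is a combination of the functions
`S ↦ [T ⊆ S]` with `|T| < q`. The hypotheses make the matrix `g_i(X_t)` triangular with unit
diagonal, so the `g_i` are linearly independent and `m ≤ #{T | |T| < q} = ∑_{j<q} C(n, j)`.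
-/

open Finset Submodule fwdDiff

theorem Choose.choose_modEq_choose_mod_pow {p : ℕ} [Fact p.Prime] {a k : ℕ} (n : ℕ)
    (hk : k < p ^ a) : n.choose k ≡ (n % p ^ a).choose k [ZMOD p] := by
  have hdigit : ∀ i ∈ range a, n % p ^ a / p ^ i % p = n / p ^ i % p := by
    intro i hi
    obtain ⟨j, rfl⟩ : ∃ j, a = i + (j + 1) := ⟨a - i - 1, by grind⟩
    rw [pow_add, Nat.mod_mul_right_div_self, Nat.mod_mod_of_dvd _ (dvd_pow_self p j.succ_ne_zero)]
  have hn := Choose.choose_modEq_choose_mul_prod_range_choose (n := n) (k := k) (p := p) a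
  rw [Nat.div_eq_of_lt hk, Nat.choose_zero_right, Nat.cast_one, one_mul] at hn
  refine hn.trans ?_
  rw [prod_congr rfl fun i hi => by rw [← hdigit i hi]]
  have hlt : n % p ^ a < p ^ a := Nat.mod_lt n (pow_pos (Fact.out : p.Prime).pos a)
  exact_mod_cast (Choose.choose_modEq_prod_range_choose hlt hk).symm

theorem eq_sum_range_choose_smul_fwdDiff_iter {G : Type*} [AddCommGroup G] (f : ℕ → G)
    {q t : ℕ} (ht : t < q) : f t = ∑ k ∈ range q, t.choose k • (Δ_[1])^[k] f 0 := by
  calc f t = ∑ k ∈ range (t + 1), t.choose k • (Δ_[1])^[k] f 0 := by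
        simpa using shift_eq_sum_fwdDiff_iter 1 f t 0
    _ = _ := sum_subset (range_subset_range.2 ht) fun k _ hk => by
        rw [Nat.choose_eq_zero_of_lt (by simpa using hk), zero_smul]

theorem apply_mod_pow_eq_sum_choose_mul {p : ℕ} [Fact p.Prime] (a : ℕ) (v : ℕ → ZMod p)
    (t : ℕ) :
    v (t % p ^ a) = ∑ k ∈ range (p ^ a), (t.choose k : ZMod p) * (Δ_[1])^[k] v 0 := by
  rw [eq_sum_range_choose_smul_fwdDiff_iter v (Nat.mod_lt t (pow_pos (Fact.out : p.Prime).pos a))]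
  refine sum_congr rfl fun k hk => ?_
  rw [nsmul_eq_mul, ← Int.cast_natCast, ← Int.cast_natCast (R := ZMod p) (t.choose k),
    (ZMod.intCast_eq_intCast_iff _ _ p).2
      (Choose.choose_modEq_choose_mod_pow t (mem_range.1 hk)).symm]

section SupersetIndicator

variable {α : Type*} [DecidableEq α] (R : Type*) [CommRing R]

/-- The multilinear monomial `x^T` evaluated at the characteristic vector of `S`. -/
def supersetIndicator (T S : Finset α) : R := if T ⊆ S then 1 else 0

theorem natCast_choose_card_inter_eq_sum (S Y : Finset α) (k : ℕ) :
    ((#(S ∩ Y)).choose k : R) = ∑ T ∈ Y.powersetCard k, supersetIndicator R T S := by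
  have : {T ∈ Y.powersetCard k | T ⊆ S} = (S ∩ Y).powersetCard k := by
    ext T
    simp only [mem_filter, mem_powersetCard, subset_inter_iff]
    tauto
  simp only [supersetIndicator, sum_boole, this, card_powersetCard]

variable [Fintype α] [DecidableEq R]

theorem comp_card_inter_mem_span (f : ℕ → R) (q : ℕ) (c : ℕ → R)
    (hf : ∀ t, f t = ∑ k ∈ range q, (t.choose k : R) * c k) (Y : Finset α) :
    (fun S => f #(S ∩ Y)) ∈ span R
      (({T | #T < q} : Finset (Finset α)).image (supersetIndicator R) : Set (Finset α → R)) := by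
  have : (fun S => f #(S ∩ Y)) =
      ∑ k ∈ range q, ∑ T ∈ Y.powersetCard k, c k • supersetIndicator R T := by
    ext S
    simp [hf, natCast_choose_card_inter_eq_sum, mul_sum, mul_comm]
  rw [this]
  refine sum_mem fun k hk => sum_mem fun T hT => smul_mem _ _ (subset_span ?_)
  rw [mem_powersetCard] at hT
  exact mem_image_of_mem _ (by simpa [hT.2] using mem_range.1 hk)

end SupersetIndicator

theorem card_filter_card_lt {α : Type*} [Fintype α] (q : ℕ) :
    #{T : Finset α | #T < q} = ∑ j ∈ range q, (Fintype.card α).choose j := by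
  rw [card_eq_sum_card_fiberwise (f := card) (t := range q) fun T hT => by simpa using hT]
  refine sum_congr rfl fun j hj => ?_
  rw [← card_univ, ← card_powersetCard, powersetCard_eq_filter, filter_filter]
  congr 1
  ext T
  simp only [mem_filter, mem_univ, true_and, mem_powerset, subset_univ]
  grind

theorem linearIndependent_of_triangular {K ι α : Type*} [CommRing K] [IsDomain K] [Fintype ι]
    [LinearOrder ι] (g : ι → α → K) (x : ι → α) (hdiag : ∀ i, g i (x i) ≠ 0)
    (htri : ∀ i t, i < t → g i (x t) = 0) : LinearIndependent K g := by
  let M : Matrix ι ι K := Matrix.of fun t i => g i (x t)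
  have hM : M.IsUpperTriangular := fun t i hit => htri i t hit
  have hdet : M.det ≠ 0 := by
    rw [Matrix.det_of_isUpperTriangular hM]
    exact prod_ne_zero_iff.2 fun i _ => hdiag i
  exact LinearIndependent.of_comp (LinearMap.funLeft K K x)
    (Matrix.linearIndependent_cols_of_det_ne_zero hdet)

theorem stmt17_general (p α n m : ℕ) (hp : p.Prime) (q : ℕ) (hq : q = p ^ α)
    (L : Finset ℕ)
    (X Y : Fin m → Finset (Fin n))
    (hsub : ∀ i, Y i ⊆ X i)
    (havoid : ∀ i, (Y i).card % q ∉ L)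
    (hint : ∀ i t : Fin m, i < t → (X t ∩ Y i).card % q ∈ L) :
    m ≤ ∑ j ∈ Finset.range q, n.choose j := by
  have := Fact.mk hp
  subst hq
  let v : ℕ → ZMod p := fun t => if t ∈ L then 0 else 1
  let g : Fin m → Finset (Fin n) → ZMod p := fun i S => v (#(S ∩ Y i) % p ^ α)
  have hg : LinearIndependent (ZMod p) g := linearIndependent_of_triangular g X
    (fun i => by simp [g, v, inter_eq_right.2 (hsub i), havoid i])
    (fun i t hit => by simp [g, v, hint i t hit])
  have hspan : ∀ i, g i ∈ span (ZMod p)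
      (({T | #T < p ^ α} : Finset (Finset (Fin n))).image (supersetIndicator (ZMod p)) :
        Set (Finset (Fin n) → ZMod p)) :=
    fun i => comp_card_inter_mem_span (ZMod p) (fun t => v (t % p ^ α)) (p ^ α) _
      (apply_mod_pow_eq_sum_choose_mul α v) (Y i)
  calc m = Fintype.card (Fin m) := (Fintype.card_fin m).symm
    _ ≤ _ := by simpa using linearIndependent_le_span' g hg _ (Set.range_subset_iff.2 hspan)
    _ ≤ #{T : Finset (Fin n) | #T < p ^ α} := card_image_le
    _ = ∑ j ∈ range (p ^ α), n.choose j := by rw [card_filter_card_lt, Fintype.card_fin]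

/-- Core triangular step in the proof of Theorem main3: given pairs
`(X_1,Y_1),...,(X_m,Y_m)` of subsets of `[n]` with `Y_i ⊆ X_i`,
`|Y_i| mod q ∉ L` for all `i`, and `|X_t ∩ Y_i| mod q ∈ L` for all `t > i`,
we have `m ≤ Σ_{j=0}^{q-1} C(n,j)`. -/
theorem stmt17 (p α n m : ℕ) (hp : p.Prime) (hα : 1 ≤ α) (q : ℕ) (hq : q = p ^ α)
    (L : Finset ℕ) (hL : L ⊂ Finset.range q)
    (X Y : Fin m → Finset (Fin n))
    (hsub : ∀ i, Y i ⊆ X i)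
    (havoid : ∀ i, (Y i).card % q ∉ L)
    (hint : ∀ i t : Fin m, i < t → (X t ∩ Y i).card % q ∈ L) :
    m ≤ ∑ j ∈ Finset.range q, n.choose j :=
  stmt17_general p α n m hp q hq L X Y hsub havoid hint
end
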